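/- arXiv:2508.04954 — 7 statements merged into one kernel-verified Lean document; each statement's English description precedes it below -/
import Mathlib

section
/- Let $\alpha_1,\alpha_2 > 0$ and $\alpha_3 > (\sqrt{\alpha_1}+\sqrt{\alpha_2})^2$, with $\mathrm{Q} = \alpha_3^2 - 2(\alpha_1+\alpha_2)\alpha_3 + (\alpha_1-\alpha_2)^2$ and critical points $z_c^\pm = \frac{-\alpha_3+\alpha_1-\alpha_2\pm\sqrt{\mathrm{Q}}}{2\alpha_3}$ of $\mathrm{G}(z) = -\alpha_1\log(z+1)+\alpha_2\log z+\alpha_3 z$. Then $\mathrm{G}''(z_c^+) < 0$ and $\mathrm{G}''(z_c^-) > 0$, where $\mathrm{G}''(z) = \frac{\alpha_1}{(z+1)^2} - \frac{\alpha_2}{z^2}$. -/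
lemma key_plus (a b c s : ℝ) (hs0 : 0 < s)
    (h4 : (a - b) * s < (a + b) * c - (a - b) ^ 2)
    (hcancel : (a - b) * s ^ 2 = (a - b) * (c ^ 2 - 2 * (a + b) * c + (a - b) ^ 2)) :
    0 < b * (c + a - b + s) ^ 2 - a * (-c + a - b + s) ^ 2 := by
  nlinarith [mul_pos hs0 (sub_pos.2 h4), hcancel]

lemma key_minus (a b c s : ℝ) (hs0 : 0 < s)
    (h4' : 0 < (a + b) * c - (a - b) ^ 2 + (a - b) * s)
    (hcancel : (a - b) * s ^ 2 = (a - b) * (c ^ 2 - 2 * (a + b) * c + (a - b) ^ 2)) :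
    0 < a * (-c + a - b - s) ^ 2 - b * (c + a - b - s) ^ 2 := by
  nlinarith [mul_pos hs0 h4', hcancel]


theorem stmt_4 (α₁ α₂ α₃ Q zp zm : ℝ) (h1 : 0 < α₁) (h2 : 0 < α₂)
    (h3 : (Real.sqrt α₁ + Real.sqrt α₂) ^ 2 < α₃)
    (hQ : Q = α₃ ^ 2 - 2 * (α₁ + α₂) * α₃ + (α₁ - α₂) ^ 2)
    (hzp : zp = (-α₃ + α₁ - α₂ + Real.sqrt Q) / (2 * α₃))
    (hzm : zm = (-α₃ + α₁ - α₂ - Real.sqrt Q) / (2 * α₃)) :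
    α₁ / (zp + 1) ^ 2 - α₂ / zp ^ 2 < 0 ∧ 0 < α₁ / (zm + 1) ^ 2 - α₂ / zm ^ 2 := by
  set p := Real.sqrt α₁ with hp
  set q := Real.sqrt α₂ with hq
  have hp0 : 0 < p := Real.sqrt_pos.2 h1
  have hq0 : 0 < q := Real.sqrt_pos.2 h2
  have hpa : p ^ 2 = α₁ := Real.sq_sqrt h1.le
  have hqa : q ^ 2 = α₂ := Real.sq_sqrt h2.le
  have hc : 0 < α₃ := lt_trans (by positivity) h3
  have hQfac : Q = (α₃ - (p + q) ^ 2) * (α₃ - (p - q) ^ 2) := by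
    rw [hQ, ← hpa, ← hqa]; ring
  have hQpos : 0 < Q := by
    rw [hQfac]
    exact mul_pos (sub_pos.2 h3) (by nlinarith [mul_pos hp0 hq0])
  set s := Real.sqrt Q with hsdef
  have hs0 : 0 < s := Real.sqrt_pos.2 hQpos
  have hs2 : s ^ 2 = Q := Real.sq_sqrt hQpos.le
  have ha3 : α₁ < α₃ := by nlinarith [mul_pos hp0 hq0]
  have hb3 : α₂ < α₃ := by nlinarith [mul_pos hp0 hq0]
  have hX : 0 < (α₁ + α₂) * α₃ - (α₁ - α₂) ^ 2 := by
    nlinarith [mul_pos hp0 hq0, sq_nonneg (p + q),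
      mul_pos (mul_pos hp0 hq0) (mul_pos hp0 hq0)]
  have hkey : ((α₁ + α₂) * α₃ - (α₁ - α₂) ^ 2) ^ 2 - (α₁ - α₂) ^ 2 * Q
      = 4 * α₁ * α₂ * α₃ ^ 2 := by rw [hQ]; ring
  have hsq_eq : ((α₁ - α₂) * s) ^ 2 = (α₁ - α₂) ^ 2 * Q := by rw [← hs2]; ring
  have hsq : ((α₁ - α₂) * s) ^ 2 < ((α₁ + α₂) * α₃ - (α₁ - α₂) ^ 2) ^ 2 := by
    have h4abc : 0 < 4 * α₁ * α₂ * α₃ ^ 2 := by positivity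
    linarith [hsq_eq, hkey, h4abc]
  have habs : |(α₁ - α₂) * s| < (α₁ + α₂) * α₃ - (α₁ - α₂) ^ 2 :=
    abs_lt_of_sq_lt_sq hsq hX.le
  have h4 : (α₁ - α₂) * s < (α₁ + α₂) * α₃ - (α₁ - α₂) ^ 2 :=
    (le_abs_self _).trans_lt habs
  have h4' : -((α₁ - α₂) * s) < (α₁ + α₂) * α₃ - (α₁ - α₂) ^ 2 := by
    linarith [(abs_lt.1 habs).1]
  have hBkey : (α₃ + α₁ - α₂) ^ 2 - Q = 4 * α₁ * α₃ := by rw [hQ]; ring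
  have hAkey : (α₃ - α₁ + α₂) ^ 2 - Q = 4 * α₂ * α₃ := by rw [hQ]; ring
  have hsB : s < α₃ + α₁ - α₂ := by
    have : s ^ 2 < (α₃ + α₁ - α₂) ^ 2 := by
      rw [hs2]; linarith [hBkey, mul_pos h1 hc]
    exact lt_of_pow_lt_pow_left₀ 2 (by linarith) this
  have hsA : s < α₃ - α₁ + α₂ := by
    have : s ^ 2 < (α₃ - α₁ + α₂) ^ 2 := by
      rw [hs2]; linarith [hAkey, mul_pos h2 hc]
    exact lt_of_pow_lt_pow_left₀ 2 (by linarith) this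
  have hzp0 : zp < 0 := by
    rw [hzp]; apply div_neg_of_neg_of_pos <;> linarith
  have hzp1e : zp + 1 = (α₃ + α₁ - α₂ + s) / (2 * α₃) := by
    rw [hzp]; field_simp; ring
  have hzp1 : 0 < zp + 1 := by
    rw [hzp1e]; apply div_pos <;> linarith
  have hzm0 : zm < 0 := by
    rw [hzm]; apply div_neg_of_neg_of_pos <;> linarith
  have hzm1e : zm + 1 = (α₃ + α₁ - α₂ - s) / (2 * α₃) := by
    rw [hzm]; field_simp; ring
  have hzm1 : 0 < zm + 1 := by
    rw [hzm1e]; apply div_pos <;> linarith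
  have hc2 : (0:ℝ) < 4 * α₃ ^ 2 := by positivity
  have hcancel : (α₁ - α₂) * s ^ 2
      = (α₁ - α₂) * (α₃ ^ 2 - 2 * (α₁ + α₂) * α₃ + (α₁ - α₂) ^ 2) := by
    rw [hs2, hQ]
  constructor
  · have keyp : 0 < α₂ * (α₃ + α₁ - α₂ + s) ^ 2 - α₁ * (-α₃ + α₁ - α₂ + s) ^ 2 :=
      key_plus α₁ α₂ α₃ s hs0 h4 hcancel
    have hpos : 0 < α₂ * (zp + 1) ^ 2 - α₁ * zp ^ 2 := by
      rw [hzp1e, hzp, div_pow, div_pow, ← mul_div_assoc, ← mul_div_assoc, div_sub_div_same]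
      exact div_pos keyp (by positivity)
    rw [sub_neg, div_lt_div_iff₀ (pow_pos hzp1 2)
      (pow_two_pos_of_ne_zero (ne_of_lt hzp0))]
    linarith [hpos]
  · have keym : 0 < α₁ * (-α₃ + α₁ - α₂ - s) ^ 2 - α₂ * (α₃ + α₁ - α₂ - s) ^ 2 :=
      key_minus α₁ α₂ α₃ s hs0 (by linarith) hcancel
    have hpos : 0 < α₁ * zm ^ 2 - α₂ * (zm + 1) ^ 2 := by
      rw [hzm1e, hzm, div_pow, div_pow, ← mul_div_assoc, ← mul_div_assoc, div_sub_div_same]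
      exact div_pos keym (by positivity)
    rw [sub_pos, div_lt_div_iff₀ (pow_two_pos_of_ne_zero (ne_of_lt hzm0))
      (pow_pos hzm1 2)]
    linarith [hpos]
end

section
/- Let $\alpha_1 < 0$ and $\alpha_2, \alpha_3 > 0$, and $\mathrm{Q} = \alpha_3^2 - 2(\alpha_1+\alpha_2)\alpha_3 + (\alpha_1-\alpha_2)^2$. Then $\mathrm{Q} > 0$, and the critical points $z_c^\pm = \frac{-\alpha_3+\alpha_1-\alpha_2\pm\sqrt{\mathrm{Q}}}{2\alpha_3}$ satisfy $z_c^- < -1 < z_c^+ < 0$. -/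
theorem stmt_5 (α₁ α₂ α₃ Q : ℝ) (h1 : α₁ < 0) (h2 : 0 < α₂) (h3 : 0 < α₃)
    (hQ : Q = α₃ ^ 2 - 2 * (α₁ + α₂) * α₃ + (α₁ - α₂) ^ 2) :
    0 < Q ∧ (-α₃ + α₁ - α₂ - Real.sqrt Q) / (2 * α₃) < -1 ∧
    -1 < (-α₃ + α₁ - α₂ + Real.sqrt Q) / (2 * α₃) ∧
    (-α₃ + α₁ - α₂ + Real.sqrt Q) / (2 * α₃) < 0 := by
  have hQ0 : 0 < Q := by nlinarith [sq_nonneg (α₃ + α₁ - α₂)]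
  set s := Real.sqrt Q with hs
  have hs0 : 0 ≤ s := Real.sqrt_nonneg Q
  have hs2 : s ^ 2 = Q := Real.sq_sqrt hQ0.le
  have hgt : (α₃ + α₁ - α₂) ^ 2 < s ^ 2 := by nlinarith
  have h2a : α₃ + α₁ - α₂ < s := lt_of_pow_lt_pow_left₀ 2 hs0 hgt
  have h2b : -s < α₃ + α₁ - α₂ := by
    have := lt_of_pow_lt_pow_left₀ 2 hs0 (by nlinarith : (-(α₃ + α₁ - α₂)) ^ 2 < s ^ 2)
    linarith
  have h2c : s < α₃ - α₁ + α₂ := by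
    have := lt_of_pow_lt_pow_left₀ 2 (by linarith : (0:ℝ) ≤ α₃ - α₁ + α₂)
      (by nlinarith : s ^ 2 < (α₃ - α₁ + α₂) ^ 2)
    linarith
  have hd : 0 < 2 * α₃ := by linarith
  refine ⟨hQ0, ?_, ?_, ?_⟩
  · rw [div_lt_iff₀ hd]; linarith
  · rw [lt_div_iff₀ hd]; linarith
  · rw [div_lt_iff₀ hd]; linarith
end

section
/- Let $\alpha_2 < 0$ and $\alpha_1, \alpha_3 > 0$, and $\mathrm{Q} = \alpha_3^2 - 2(\alpha_1+\alpha_2)\alpha_3 + (\alpha_1-\alpha_2)^2$. Then $\mathrm{Q} > 0$, and the points $z_c^\pm = \frac{-\alpha_3+\alpha_1-\alpha_2\pm\sqrt{\mathrm{Q}}}{2\alpha_3}$ satisfy $-1 < z_c^- < 0 < z_c^+$. -/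
theorem stmt_6 (α₁ α₂ α₃ Q : ℝ) (h1 : 0 < α₁) (h2 : α₂ < 0) (h3 : 0 < α₃)
    (hQ : Q = α₃ ^ 2 - 2 * (α₁ + α₂) * α₃ + (α₁ - α₂) ^ 2) :
    0 < Q ∧ -1 < (-α₃ + α₁ - α₂ - Real.sqrt Q) / (2 * α₃) ∧
    (-α₃ + α₁ - α₂ - Real.sqrt Q) / (2 * α₃) < 0 ∧
    0 < (-α₃ + α₁ - α₂ + Real.sqrt Q) / (2 * α₃) := by
  have hQ0 : 0 < Q := by nlinarith [sq_nonneg (α₃ - α₁ + α₂), mul_pos h3 (neg_pos.2 h2)]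
  have hs0 : 0 ≤ Real.sqrt Q := Real.sqrt_nonneg Q
  have hs2 : Real.sqrt Q ^ 2 = Q := Real.sq_sqrt hQ0.le
  have h2a : 0 < 2 * α₃ := by linarith
  refine ⟨hQ0, ?_, ?_, ?_⟩
  · rw [lt_div_iff₀ h2a]
    nlinarith [sq_nonneg (Real.sqrt Q - (α₃ + α₁ - α₂)), mul_pos h1 h3]
  · rw [div_lt_iff₀ h2a]
    nlinarith [sq_nonneg (Real.sqrt Q + (α₁ - α₂ - α₃)), mul_pos h3 (neg_pos.2 h2)]
  · rw [lt_div_iff₀ h2a]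
    nlinarith [sq_nonneg (Real.sqrt Q + (α₃ - α₁ + α₂)), mul_pos h3 (neg_pos.2 h2)]
end

section
/- Let $I \subseteq \mathbb{R}$ be an open interval and $y_0 \in I$. For each $n \in \mathbb{N}$, let $A_n$ be an event and $\{Y_n(y)\}_{y\in I}$ a real stochastic process, and let $r \in \mathbb{R}$. Suppose (a) there is a continuous function $f$ on $I$ such that $\lim_{n\to\infty} \mathbb{P}(\{Y_n(y)\le r\}\cap A_n) = f(y)$ for every $y \in I\setminus\{y_0\}$, and (b) there is a continuous function $g$ on $I\times I$ with $g(y,y)=0$ for all $y \in I$ such that $\lim_{n\to\infty}\mathbb{P}(Y_n(y)\le r,\, Y_n(y')>r) = g(y,y')$ for all $y \neq y'$ in $I$. Then $\lim_{n\to\infty}\mathbb{P}(\{Y_n(y_0)\le r\}\cap A_n) = f(y_0)$. -/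
/-!
Write `p n` for the probability in question and `q_y n` for the same probability at `y ≠ y₀`.
Inclusion of events gives `q_y n - β_y n ≤ p n ≤ q_y n + α_y n`, where `α_y, β_y` are the two
crossing probabilities between `y₀` and `y`. As `n → ∞` the bounds tend to `f y - g y y₀` and
`f y + g y₀ y`, and both of these tend to `f y₀` as `y → y₀` by continuity and `g y₀ y₀ = 0`;
this pins down the limit of `p n`.
-/

open MeasureTheory Filter Topology

theorem Filter.Tendsto.of_approx_sandwich {ι β α : Type*} [TopologicalSpace α] [LinearOrder α]
    [OrderTopology α] {l : Filter ι} [l.NeBot] {f : Filter β} {p : β → α} {lo up : ι → β → α}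
    {a b : ι → α} {L : α}
    (hlo : ∀ᶠ i in l, Tendsto (lo i) f (𝓝 (a i))) (hup : ∀ᶠ i in l, Tendsto (up i) f (𝓝 (b i)))
    (ha : Tendsto a l (𝓝 L)) (hb : Tendsto b l (𝓝 L))
    (hlo_le : ∀ i, lo i ≤ p) (hle_up : ∀ i, p ≤ up i) :
    Tendsto p f (𝓝 L) := by
  rw [tendsto_order]
  constructor
  · intro L' hL'
    obtain ⟨i, hai, hloi⟩ := (((tendsto_order.1 ha).1 L' hL').and hlo).exists
    filter_upwards [(tendsto_order.1 hloi).1 L' hai] with n hn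
    exact hn.trans_le (hlo_le i n)
  · intro L' hL'
    obtain ⟨i, hbi, hupi⟩ := (((tendsto_order.1 hb).2 L' hL').and hup).exists
    filter_upwards [(tendsto_order.1 hupi).2 L' hbi] with n hn
    exact (hle_up i n).trans_lt hn

theorem MeasureTheory.measureReal_inter_le_add_diff {Ω : Type*} [MeasurableSpace Ω]
    (μ : Measure Ω) [IsFiniteMeasure μ] (s t A : Set Ω) :
    μ.real (s ∩ A) ≤ μ.real (t ∩ A) + μ.real (s \ t) := by
  calc μ.real (s ∩ A) ≤ μ.real (t ∩ A ∪ s \ t) := by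
        refine measureReal_mono fun ω ⟨hs, hA⟩ => ?_
        by_cases ht : ω ∈ t
        · exact Or.inl ⟨ht, hA⟩
        · exact Or.inr ⟨hs, ht⟩
    _ ≤ μ.real (t ∩ A) + μ.real (s \ t) := measureReal_union_le _ _

theorem MeasureTheory.measureReal_setOf_le_inter_le_add {Ω : Type*} [MeasurableSpace Ω]
    (μ : Measure Ω) [IsFiniteMeasure μ] (X Z : Ω → ℝ) (r : ℝ) (A : Set Ω) :
    μ.real ({ω | X ω ≤ r} ∩ A) ≤ μ.real ({ω | Z ω ≤ r} ∩ A) + μ.real {ω | X ω ≤ r ∧ r < Z ω} := by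
  have hdiff : {ω | X ω ≤ r} \ {ω | Z ω ≤ r} = {ω | X ω ≤ r ∧ r < Z ω} := by
    ext ω
    simp
  rw [← hdiff]
  exact measureReal_inter_le_add_diff μ _ _ _

theorem ContinuousOn.tendsto_slice_left {X Z : Type*} [TopologicalSpace X] [TopologicalSpace Z]
    {g : X → X → Z} {s : Set X} (hs : IsOpen s)
    (hg : ContinuousOn (fun p : X × X => g p.1 p.2) (s ×ˢ s)) {x : X} (hx : x ∈ s) :
    Tendsto (fun y => g x y) (𝓝 x) (𝓝 (g x x)) := by
  have hgx : ContinuousAt (fun p : X × X => g p.1 p.2) (x, x) :=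
    hg.continuousAt ((hs.prod hs).mem_nhds ⟨hx, hx⟩)
  exact hgx.comp (f := fun y => (x, y)) (by fun_prop)

theorem ContinuousOn.tendsto_slice_right {X Z : Type*} [TopologicalSpace X] [TopologicalSpace Z]
    {g : X → X → Z} {s : Set X} (hs : IsOpen s)
    (hg : ContinuousOn (fun p : X × X => g p.1 p.2) (s ×ˢ s)) {x : X} (hx : x ∈ s) :
    Tendsto (fun y => g y x) (𝓝 x) (𝓝 (g x x)) := by
  have hgx : ContinuousAt (fun p : X × X => g p.1 p.2) (x, x) :=
    hg.continuousAt ((hs.prod hs).mem_nhds ⟨hx, hx⟩)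
  exact hgx.comp (f := fun y => (y, x)) (by fun_prop)

theorem stmt_11 {Ω : Type*} [MeasurableSpace Ω] (P : Measure Ω) [IsProbabilityMeasure P]
    (c d y₀ : ℝ) (hy₀ : y₀ ∈ Set.Ioo c d)
    (A : ℕ → Set Ω) (Y : ℕ → ℝ → Ω → ℝ) (r : ℝ)
    (f : ℝ → ℝ) (hf : ContinuousOn f (Set.Ioo c d))
    (ha : ∀ y ∈ Set.Ioo c d, y ≠ y₀ →
      Tendsto (fun n => (P ({ω | Y n y ω ≤ r} ∩ A n)).toReal) atTop (nhds (f y)))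
    (g : ℝ → ℝ → ℝ)
    (hgcont : ContinuousOn (fun p : ℝ × ℝ => g p.1 p.2) (Set.Ioo c d ×ˢ Set.Ioo c d))
    (hg0 : ∀ y ∈ Set.Ioo c d, g y y = 0)
    (hb : ∀ y ∈ Set.Ioo c d, ∀ y' ∈ Set.Ioo c d, y ≠ y' →
      Tendsto (fun n => (P {ω | Y n y ω ≤ r ∧ r < Y n y' ω}).toReal) atTop (nhds (g y y'))) :
    Tendsto (fun n => (P ({ω | Y n y₀ ω ≤ r} ∩ A n)).toReal) atTop (nhds (f y₀)) := by
  have hnear : ∀ᶠ y in 𝓝[≠] y₀, y ∈ Set.Ioo c d ∧ y ≠ y₀ :=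
    (eventually_nhdsWithin_of_eventually_nhds (isOpen_Ioo.mem_nhds hy₀)).and self_mem_nhdsWithin
  have hf₀ : Tendsto f (𝓝 y₀) (𝓝 (f y₀)) := hf.continuousAt (isOpen_Ioo.mem_nhds hy₀)
  have hg_left := hgcont.tendsto_slice_left isOpen_Ioo hy₀
  have hg_right := hgcont.tendsto_slice_right isOpen_Ioo hy₀
  rw [hg0 y₀ hy₀] at hg_left hg_right
  refine Tendsto.of_approx_sandwich (l := 𝓝[≠] y₀)
    (lo := fun y n => P.real ({ω | Y n y ω ≤ r} ∩ A n) - P.real {ω | Y n y ω ≤ r ∧ r < Y n y₀ ω})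
    (up := fun y n => P.real ({ω | Y n y ω ≤ r} ∩ A n) + P.real {ω | Y n y₀ ω ≤ r ∧ r < Y n y ω})
    (hnear.mono fun y ⟨hy, hne⟩ => (ha y hy hne).sub (hb y hy y₀ hy₀ hne))
    (hnear.mono fun y ⟨hy, hne⟩ => (ha y hy hne).add (hb y₀ hy₀ y hy hne.symm))
    (by simpa using (hf₀.sub hg_right).mono_left nhdsWithin_le_nhds)
    (by simpa using (hf₀.add hg_left).mono_left nhdsWithin_le_nhds)
    (fun y n => ?_) (fun y n => ?_)
  · exact sub_le_iff_le_add.2 (measureReal_setOf_le_inter_le_add P _ _ r (A n))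
  · exact measureReal_setOf_le_inter_le_add P _ _ r (A n)
end

section
/- For all positive integers $n$ and $n'$: $\sum_{a=0}^{n\wedge n'} a!\,\sqrt{(n+n'-a)!} \le \frac{2^{2(n+n')}\, n!\, n'!}{\sqrt{(n\vee n' - n\wedge n')!}}$. -/
/-!
Multiply through by `√((n ∨ n' - n ∧ n')!)`. Since `n ∨ n' - n ∧ n' ≤ n + n' - a` for `a ≤ n ∧ n'`,
the product `√((n + n' - a)!) · √((n ∨ n' - n ∧ n')!)` is at most `(n + n' - a)!`, so each term
is at most `a! (n + n' - a)! ≤ (n + n')! ≤ 2^(n+n') n! n'!`. There are `n ∧ n' + 1 ≤ 2^(n+n')`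
terms.
-/

open Finset Nat

theorem Nat.factorial_add_le_two_pow_mul (m n : ℕ) : (m + n)! ≤ 2 ^ (m + n) * m ! * n ! := by
  rw [← add_choose_mul_factorial_mul_factorial m n, mul_assoc, mul_assoc]
  exact Nat.mul_le_mul_right _ (choose_le_two_pow _ _)

theorem Real.sqrt_mul_sqrt_le_of_le {x y : ℝ} (hx : 0 ≤ x) (hyx : y ≤ x) : √x * √y ≤ x :=
  calc √x * √y ≤ √x * √x := by gcongr
    _ = x := Real.mul_self_sqrt hx

theorem Nat.factorial_mul_sqrt_factorial_mul_sqrt_factorial_le {a b k : ℕ} (ha : a ≤ k)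
    (hb : b ≤ k - a) : (a ! : ℝ) * √((k - a)! : ℝ) * √(b ! : ℝ) ≤ k ! := by
  have hsqrt : √((k - a)! : ℝ) * √(b ! : ℝ) ≤ (k - a)! :=
    Real.sqrt_mul_sqrt_le_of_le (by positivity) (by exact_mod_cast factorial_le hb)
  calc (a ! : ℝ) * √((k - a)! : ℝ) * √(b ! : ℝ) = a ! * (√((k - a)! : ℝ) * √(b ! : ℝ)) :=
        mul_assoc ..
    _ ≤ a ! * (k - a)! := by gcongr
    _ ≤ k ! := by
        exact_mod_cast Nat.le_of_dvd (factorial_pos k) (factorial_mul_factorial_dvd_factorial ha)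

theorem stmt_14_general (n n' : ℕ) :
    ∑ a ∈ Finset.range (min n n' + 1),
      (a.factorial : ℝ) * Real.sqrt ((n + n' - a).factorial)
    ≤ 2 ^ (2 * (n + n')) * n.factorial * n'.factorial /
        Real.sqrt ((max n n' - min n n').factorial) := by
  have hterm : ∀ a ∈ range (min n n' + 1),
      (a ! : ℝ) * √((n + n' - a)! : ℝ) * √((max n n' - min n n')! : ℝ) ≤
        2 ^ (n + n') * n ! * n' ! := by
    intro a ha
    have ha : a ≤ min n n' := Nat.lt_succ_iff.1 (mem_range.1 ha)
    calc _ ≤ ((n + n')! : ℝ) :=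
          factorial_mul_sqrt_factorial_mul_sqrt_factorial_le (by omega) (by omega)
      _ ≤ _ := by exact_mod_cast factorial_add_le_two_pow_mul n n'
  have hcard : ((min n n' + 1 : ℕ) : ℝ) ≤ 2 ^ (n + n') := by
    exact_mod_cast Nat.lt_two_pow_self.trans_le (Nat.pow_le_pow_right two_pos (by omega))
  rw [le_div_iff₀ (Real.sqrt_pos.2 (by positivity)), sum_mul]
  calc _ ≤ (min n n' + 1) • (2 ^ (n + n') * n ! * n' ! : ℝ) := by
        simpa only [card_range] using sum_le_card_nsmul _ _ _ hterm
    _ ≤ 2 ^ (n + n') * (2 ^ (n + n') * n ! * n' !) := by rw [nsmul_eq_mul]; gcongr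
    _ = _ := by ring

theorem stmt_14 (n n' : ℕ) (hn : 1 ≤ n) (hn' : 1 ≤ n') :
    ∑ a ∈ Finset.range (min n n' + 1),
      (a.factorial : ℝ) * Real.sqrt ((n + n' - a).factorial)
    ≤ 2 ^ (2 * (n + n')) * n.factorial * n'.factorial /
        Real.sqrt ((max n n' - min n n').factorial) :=
  stmt_14_general n n'
end

section
/- Let $a,b>0$, $\ell > (\sqrt{a}+\sqrt{b})^2$, $D = \ell^2-2(a+b)\ell+(a-b)^2$, and $\mathrm{m} = \frac{\ell-a-b+\sqrt{D}}{\ell-a-b-\sqrt{D}} > 1$. Fix $(x,y) \in (0,1)^2$ with $\frac{1}{\mathrm{m}} < \frac{y}{x} < \mathrm{m}$. Define $H(t) = t\ell + (\sqrt{x-t} + \sqrt{y-t})^2$ for $t \in [0, \min(x,y)]$ (scaled with $a=b=1$; in general $H(t) = t\ell + (\sqrt{a(x-t)}+\sqrt{b(y-t)})^2$). Then the maximum of $H$ over $[0,\min(x,y,1)]$ equals $h(x,y) = \frac12[(\ell+a-b)x + (\ell-a+b)y - |x-y|\sqrt{D}]$, attained at $t_c = \frac{\mathrm{m}y - x}{\mathrm{m}-1}$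 if $y < x$ and at $t_c = \frac{\mathrm{m}x - y}{\mathrm{m}-1}$ if $y > x$. -/
theorem aux18 (a b ℓ D m x y : ℝ) (ha : 0 < a) (hb : 0 < b)
    (hl : (Real.sqrt a + Real.sqrt b) ^ 2 < ℓ)
    (hD : D = ℓ ^ 2 - 2 * (a + b) * ℓ + (a - b) ^ 2)
    (hm : m = (ℓ - a - b + Real.sqrt D) / (ℓ - a - b - Real.sqrt D))
    (hx0 : 0 < x) (hx1 : x < 1) (hy0 : 0 < y) (hy1 : y < 1)
    (hr : x < m * y) (hyx : y < x)
    (H : ℝ → ℝ)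
    (hH : ∀ t, H t = t * ℓ + (Real.sqrt (a * (x - t)) + Real.sqrt (b * (y - t))) ^ 2)
    (tc : ℝ) (htc : tc = (m * y - x) / (m - 1)) :
    tc ∈ Set.Icc (0 : ℝ) (min (min x y) 1) ∧
    (∀ t ∈ Set.Icc (0 : ℝ) (min (min x y) 1), H t ≤ H tc) ∧
    H tc = (1 / 2) * ((ℓ + a - b) * x + (ℓ - a + b) * y - |x - y| * Real.sqrt D) := by
  obtain ⟨k, hk⟩ : ∃ k : ℝ, k = ℓ - a - b := ⟨_, rfl⟩
  obtain ⟨s, hs⟩ : ∃ s : ℝ, s = Real.sqrt D := ⟨_, rfl⟩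
  have hsa : Real.sqrt a ^ 2 = a := Real.sq_sqrt ha.le
  have hsb : Real.sqrt b ^ 2 = b := Real.sq_sqrt hb.le
  have hsab : 0 ≤ Real.sqrt a * Real.sqrt b := by positivity
  have hk0 : 2 * (Real.sqrt a * Real.sqrt b) < k := by rw [hk]; nlinarith [hl, hsa, hsb]
  have hkpos : 0 < k := by linarith
  have hDk : D = k ^ 2 - 4 * a * b := by rw [hD, hk]; ring
  have hDpos : 0 < D := by nlinarith [hk0, hsab, hsa, hsb, hDk]
  have hs2 : s ^ 2 = k ^ 2 - 4 * a * b := by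
    rw [hs, Real.sq_sqrt hDpos.le, hDk]
  have hsnn : 0 ≤ s := by rw [hs]; positivity
  have hsq : 0 < s := by rw [hs]; exact Real.sqrt_pos.mpr hDpos
  have hsk : s < k := by nlinarith [hs2, mul_pos ha hb, hkpos, hsnn]
  have hks0 : 0 < k - s := by linarith
  have hm' : m = (k + s) / (k - s) := by rw [hm, hk, hs]
  have hm1 : 1 < m := by rw [hm', lt_div_iff₀ hks0]; linarith
  have hmne : m - 1 ≠ 0 := ne_of_gt (by linarith)
  have h1 : tc * (m - 1) = m * y - x := by rw [htc]; field_simp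
  have h2 : m * (k - s) = k + s := by rw [hm']; field_simp
  have htck : 2 * s * tc = (k + s) * y - (k - s) * x := by
    linear_combination (k - s) * h1 + (y - tc) * h2
  have htc0 : 0 < tc := by
    have hpos : 0 < 2 * s * tc := by
      have hA : 2 * s * tc = (k - s) * (m * y - x) := by
        linear_combination htck + (-y) * h2
      rw [hA]; exact mul_pos hks0 (sub_pos.mpr hr)
    rcases mul_pos_iff.mp hpos with ⟨_, h⟩ | ⟨h, _⟩
    · exact h
    · linarith
  have htcy : tc < y := by
    have hpos2 : 0 < 2 * s * (y - tc) := by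
      have he : 2 * s * (y - tc) = (k - s) * (x - y) := by
        linear_combination (-1 : ℝ) * htck
      rw [he]; exact mul_pos hks0 (sub_pos.mpr hyx)
    rcases mul_pos_iff.mp hpos2 with ⟨_, h⟩ | ⟨h, _⟩
    · linarith
    · linarith
  obtain ⟨C, hC⟩ : ∃ C : ℝ, C = (k * (x + y) - s * (x - y)) / 2 := ⟨_, rfl⟩
  have quad : ∀ t, (C - t * k) ^ 2 - 4 * (a * b * ((x - t) * (y - t))) = s ^ 2 * (t - tc) ^ 2 := by
    intro t
    rw [hC]
    linear_combination (s * t - (2 * s * tc + ((k + s) * y - (k - s) * x)) / 4) * htck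
      - ((x - t) * (y - t)) * hs2
  have hHt : ∀ t, 0 ≤ t → t ≤ y →
      H t = t * ℓ + a * (x - t) + b * (y - t)
        + 2 * (Real.sqrt (a * (x - t)) * Real.sqrt (b * (y - t))) := by
    intro t ht0 hty
    rw [hH t, add_sq, Real.sq_sqrt (mul_nonneg ha.le (by linarith : (0:ℝ) ≤ x - t)),
      Real.sq_sqrt (mul_nonneg hb.le (by linarith : (0:ℝ) ≤ y - t))]
    ring
  have hW2 : ∀ t, 0 ≤ t → t ≤ y →
      (Real.sqrt (a * (x - t)) * Real.sqrt (b * (y - t))) ^ 2 = a * b * ((x - t) * (y - t)) := by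
    intro t ht0 hty
    rw [mul_pow, Real.sq_sqrt (mul_nonneg ha.le (by linarith : (0:ℝ) ≤ x - t)),
      Real.sq_sqrt (mul_nonneg hb.le (by linarith : (0:ℝ) ≤ y - t))]
    ring
  have hCk : ∀ t, t ≤ y → 0 ≤ C - t * k := by
    intro t hty
    have h3 : C - y * k = (x - y) * (k - s) / 2 := by rw [hC]; ring
    have h4 := mul_pos (sub_pos.mpr hyx) hks0
    have h5 := mul_nonneg (sub_nonneg.mpr hty) hkpos.le
    linarith [h3, h4, h5]
  have hW5 : ∀ t, 0 ≤ t → t ≤ y →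
      2 * (Real.sqrt (a * (x - t)) * Real.sqrt (b * (y - t))) ≤ C - t * k := by
    intro t ht0 hty
    have hq := quad t
    have hW := hW2 t ht0 hty
    have hc := hCk t hty
    have h4 : (2 * (Real.sqrt (a * (x - t)) * Real.sqrt (b * (y - t)))) ^ 2
        ≤ (C - t * k) ^ 2 := by
      linarith [hq, hW, sq_nonneg (s * (t - tc))]
    have h6 := Real.sqrt_le_sqrt h4
    rwa [Real.sqrt_sq (by positivity), Real.sqrt_sq hc] at h6
  have key : ∀ t, 0 ≤ t → t ≤ y → H t ≤ C + a * x + b * y := by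
    intro t ht0 hty
    have h5 := hW5 t ht0 hty
    have hk' : t * k = t * ℓ - t * a - t * b := by rw [hk]; ring
    rw [hHt t ht0 hty]
    linarith [h5, hk']
  have heq : H tc = C + a * x + b * y := by
    have hq := quad tc
    have hW := hW2 tc htc0.le htcy.le
    have hc := hCk tc htcy.le
    have h6 : (C - tc * k) ^ 2
        = (2 * (Real.sqrt (a * (x - tc)) * Real.sqrt (b * (y - tc)))) ^ 2 := by
      linear_combination hq - 4 * hW
    have h7 : C - tc * k = 2 * (Real.sqrt (a * (x - tc)) * Real.sqrt (b * (y - tc))) := by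
      have h8 := congrArg Real.sqrt h6
      rwa [Real.sqrt_sq hc, Real.sqrt_sq (by positivity)] at h8
    have hk' : tc * k = tc * ℓ - tc * a - tc * b := by rw [hk]; ring
    rw [hHt tc htc0.le htcy.le]
    linarith [h7, hk']
  refine ⟨⟨htc0.le, le_min (le_min (by linarith) htcy.le) (by linarith)⟩, ?_, ?_⟩
  · intro t ht
    obtain ⟨ht0, ht1⟩ := ht
    have hty : t ≤ y := le_trans ht1 (le_trans (min_le_left _ _) (min_le_right _ _))
    calc H t ≤ C + a * x + b * y := key t ht0 hty
      _ = H tc := heq.symm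
  · rw [heq, abs_of_pos (sub_pos.mpr hyx), hC, ← hs, hk]
    ring

theorem stmt_18 (a b ℓ D m x y : ℝ) (ha : 0 < a) (hb : 0 < b)
    (hl : (Real.sqrt a + Real.sqrt b) ^ 2 < ℓ)
    (hD : D = ℓ ^ 2 - 2 * (a + b) * ℓ + (a - b) ^ 2)
    (hm : m = (ℓ - a - b + Real.sqrt D) / (ℓ - a - b - Real.sqrt D))
    (hx : x ∈ Set.Ioo (0 : ℝ) 1) (hy : y ∈ Set.Ioo (0 : ℝ) 1)
    (hr1 : 1 / m < y / x) (hr2 : y / x < m) (hxy : x ≠ y)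
    (H : ℝ → ℝ)
    (hH : ∀ t, H t = t * ℓ + (Real.sqrt (a * (x - t)) + Real.sqrt (b * (y - t))) ^ 2)
    (tc : ℝ)
    (htc : tc = if y < x then (m * y - x) / (m - 1) else (m * x - y) / (m - 1)) :
    tc ∈ Set.Icc (0 : ℝ) (min (min x y) 1) ∧
    (∀ t ∈ Set.Icc (0 : ℝ) (min (min x y) 1), H t ≤ H tc) ∧
    H tc = (1 / 2) * ((ℓ + a - b) * x + (ℓ - a + b) * y - |x - y| * Real.sqrt D) := by
  obtain ⟨hx0, hx1⟩ := hx
  obtain ⟨hy0, hy1⟩ := hy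
  rcases hxy.lt_or_gt with hlt | hgt
  · -- x < y : apply aux with roles of (a,x) and (b,y) swapped
    have htc' : tc = (m * x - y) / (m - 1) := by
      rw [htc, if_neg (not_lt.mpr hlt.le)]
    have hr : y < m * x := (div_lt_iff₀ hx0).mp hr2
    have hl' : (Real.sqrt b + Real.sqrt a) ^ 2 < ℓ := by rwa [add_comm]
    have hD' : D = ℓ ^ 2 - 2 * (b + a) * ℓ + (b - a) ^ 2 := by rw [hD]; ring
    have hm' : m = (ℓ - b - a + Real.sqrt D) / (ℓ - b - a - Real.sqrt D) := by
      rw [hm]; ring_nf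
    have hH' : ∀ t, H t = t * ℓ + (Real.sqrt (b * (y - t)) + Real.sqrt (a * (x - t))) ^ 2 := by
      intro t; rw [hH t]; ring
    obtain ⟨m1, m2, m3⟩ := aux18 b a ℓ D m y x hb ha hl' hD' hm' hy0 hy1 hx0 hx1 hr hlt H hH' tc htc'
    refine ⟨?_, ?_, ?_⟩
    · rwa [min_comm y x] at m1
    · intro t ht
      apply m2
      rwa [min_comm y x]
    · rw [m3, abs_sub_comm y x]
      ring
  · -- y < x : apply aux directly; need x < m * y, which requires m > 0
    have htc' : tc = (m * y - x) / (m - 1) := by rw [htc, if_pos hgt]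
    have hsa : Real.sqrt a ^ 2 = a := Real.sq_sqrt ha.le
    have hsb : Real.sqrt b ^ 2 = b := Real.sq_sqrt hb.le
    have hsab : 0 ≤ Real.sqrt a * Real.sqrt b := by positivity
    have hk0 : 2 * (Real.sqrt a * Real.sqrt b) < ℓ - a - b := by nlinarith [hl, hsa, hsb]
    have hDpos : 0 < D := by nlinarith [hk0, hsab, hsa, hsb, hD]
    have hs2 : Real.sqrt D ^ 2 = (ℓ - a - b) ^ 2 - 4 * a * b := by
      rw [Real.sq_sqrt hDpos.le, hD]; ring
    have hsnn : 0 ≤ Real.sqrt D := Real.sqrt_nonneg D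
    have hsk : Real.sqrt D < ℓ - a - b := by
      nlinarith [hs2, mul_pos ha hb, hk0, hsab, hsnn]
    have hks0 : 0 < ℓ - a - b - Real.sqrt D := by linarith
    have hm1 : 1 < m := by rw [hm, lt_div_iff₀ hks0]; nlinarith [Real.sqrt_pos.mpr hDpos]
    have hr : x < m * y := by
      rw [div_lt_div_iff₀ (by linarith : (0:ℝ) < m) hx0] at hr1
      linarith
    exact aux18 a b ℓ D m x y ha hb hl hD hm hx0 hx1 hy0 hy1 hr hgt H hH tc htc'
end

section
/- Let $a,b>0$, $\ell > (\sqrt{a}+\sqrt{b})^2$, and $D = \ell^2-2(a+b)\ell+(a-b)^2$. Then $\mathrm{J}(\ell) := \sqrt{D} + a\log\left(\frac{\ell+a-b-\sqrt{D}}{\ell+a-b+\sqrt{D}}\right) + b\log\left(\frac{\ell-a+b-\sqrt{D}}{\ell-a+b+\sqrt{D}}\right) = \mathrm{G}(z^+) - \mathrm{G}(z^-) > 0$, where $\mathrm{G}(z) = -a\log(z+1)+b\log z+\ell z$ and $z^\pm = \frac{-\ell+a-b\pm\sqrt{D}}{2\ell}$; in particular $\mathrm{J}(\ell) > 0$. 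-/
/-!
With `s = √D`, the points `z±` are the roots of `ℓ z² + (ℓ - a + b) z + b`, and
`z± + 1 = (ℓ + a - b ± s) / (2ℓ)`, `-z± = (ℓ - a + b ∓ s) / (2ℓ)`, `ℓ (z⁺ - z⁻) = s`; so the
identity `J = G z⁺ - G z⁻` is the additivity of the logarithm. The hypothesis on `ℓ` puts both
roots in `(-1, 0)`, where `G'(z) = ℓ (z - z⁻) (z - z⁺) / (z (z + 1))` is positive between them,
so `G` increases strictly on `[z⁻, z⁺]` and `J > 0`.
-/

open Real Set

-- `Real.log z = log |z|`, so on `(-1, 0)` the term `b log z` is the real part of the paper's.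
noncomputable def logPotential (a b ℓ z : ℝ) : ℝ := -a * log (z + 1) + b * log z + ℓ * z

section

variable {a b ℓ : ℝ}

lemma add_lt_of_sqrt_add_sqrt_sq_lt (ha : 0 ≤ a) (hb : 0 ≤ b) (hl : (√a + √b) ^ 2 < ℓ) :
    a + b < ℓ := by
  nlinarith [sq_sqrt ha, sq_sqrt hb, mul_nonneg (sqrt_nonneg a) (sqrt_nonneg b)]

lemma discrim_pos_of_sqrt_add_sqrt_sq_lt (ha : 0 ≤ a) (hb : 0 ≤ b) (hl : (√a + √b) ^ 2 < ℓ) :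
    0 < ℓ ^ 2 - 2 * (a + b) * ℓ + (a - b) ^ 2 := by
  have hfactor : ℓ ^ 2 - 2 * (a + b) * ℓ + (a - b) ^ 2
      = (ℓ - (√a + √b) ^ 2) * (ℓ - (√a - √b) ^ 2) := by
    conv_lhs => rw [← sq_sqrt ha, ← sq_sqrt hb]
    ring
  rw [hfactor]
  exact mul_pos (sub_pos.2 hl) (by nlinarith [mul_nonneg (sqrt_nonneg a) (sqrt_nonneg b)])

lemma hasDerivAt_logPotential {x : ℝ} (hx₁ : x + 1 ≠ 0) (hx₀ : x ≠ 0) :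
    HasDerivAt (logPotential a b ℓ) (-a / (x + 1) + b / x + ℓ) x := by
  have hlog₁ : HasDerivAt (fun z ↦ log (z + 1)) (x + 1)⁻¹ x := by
    simpa using ((hasDerivAt_id x).add_const 1).log hx₁
  exact (((hlog₁.const_mul (-a)).add ((hasDerivAt_log hx₀).const_mul b)).add
    ((hasDerivAt_id' x).const_mul ℓ)).congr_deriv (by ring)

lemma logPotential_sub {x y : ℝ} (hx₁ : x + 1 ≠ 0) (hy₁ : y + 1 ≠ 0) (hx₀ : x ≠ 0)
    (hy₀ : y ≠ 0) :
    logPotential a b ℓ y - logPotential a b ℓ x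
      = a * log ((x + 1) / (y + 1)) + b * log (y / x) + ℓ * (y - x) := by
  simp only [logPotential, log_div hx₁ hy₁, log_div hy₀ hx₀]
  ring

lemma strictMonoOn_logPotential {z₁ z₂ : ℝ} (hℓ : 0 < ℓ) (hsum : ℓ * (z₁ + z₂) = a - b - ℓ)
    (hprod : ℓ * (z₁ * z₂) = b) (hz₁ : -1 < z₁) (hz₂ : z₂ < 0) :
    StrictMonoOn (logPotential a b ℓ) (Icc z₁ z₂) := by
  have hderiv : ∀ x ∈ Icc z₁ z₂,
      HasDerivAt (logPotential a b ℓ) (-a / (x + 1) + b / x + ℓ) x := fun x hx ↦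
    hasDerivAt_logPotential (by linarith [hx.1]) (by linarith [hx.2])
  refine strictMonoOn_of_hasDerivWithinAt_pos (convex_Icc z₁ z₂)
    (fun x hx ↦ (hderiv x hx).continuousAt.continuousWithinAt)
    (fun x hx ↦ (hderiv x (interior_subset hx)).hasDerivWithinAt) fun x hx ↦ ?_
  rw [interior_Icc] at hx
  obtain ⟨hz₁x, hxz₂⟩ := hx
  have hx₀ : x < 0 := hxz₂.trans hz₂
  have hx₁ : 0 < x + 1 := by linarith
  have hfactor : -a / (x + 1) + b / x + ℓ = ℓ * (x - z₁) * (x - z₂) / (x * (x + 1)) := by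
    field_simp [hx₀.ne, hx₁.ne']
    linear_combination x * hsum - hprod
  rw [hfactor]
  exact div_pos_of_neg_of_neg
    (mul_neg_of_pos_of_neg (mul_pos hℓ (sub_pos.2 hz₁x)) (sub_neg.2 hxz₂))
    (mul_neg_of_neg_of_pos hx₀ hx₁)

end

theorem stmt_19 (a b ℓ D : ℝ) (ha : 0 < a) (hb : 0 < b)
    (hl : (Real.sqrt a + Real.sqrt b) ^ 2 < ℓ)
    (hD : D = ℓ ^ 2 - 2 * (a + b) * ℓ + (a - b) ^ 2)
    (G : ℝ → ℝ)
    (hG : ∀ z, G z = -a * Real.log (z + 1) + b * Real.log z + ℓ * z)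
    (zp zm J : ℝ)
    (hzp : zp = (-ℓ + a - b + Real.sqrt D) / (2 * ℓ))
    (hzm : zm = (-ℓ + a - b - Real.sqrt D) / (2 * ℓ))
    (hJ : J = Real.sqrt D +
      a * Real.log ((ℓ + a - b - Real.sqrt D) / (ℓ + a - b + Real.sqrt D)) +
      b * Real.log ((ℓ - a + b - Real.sqrt D) / (ℓ - a + b + Real.sqrt D))) :
    J = G zp - G zm ∧ 0 < J := by
  have hab : a + b < ℓ := add_lt_of_sqrt_add_sqrt_sq_lt ha.le hb.le hl
  have hℓ : 0 < ℓ := by linarith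
  have hD₀ : 0 < D := hD ▸ discrim_pos_of_sqrt_add_sqrt_sq_lt ha.le hb.le hl
  have hG' : G = logPotential a b ℓ := funext hG
  set s := √D
  have hs₀ : 0 < s := sqrt_pos.2 hD₀
  have hsa : s < ℓ + a - b := (sqrt_lt' (by linarith)).2 (by nlinarith)
  have hsb : s < ℓ - a + b := (sqrt_lt' (by linarith)).2 (by nlinarith)
  have hzm₁ : -1 < zm := by rw [hzm, lt_div_iff₀ (by positivity)]; linarith
  have hzp₀ : zp < 0 := by rw [hzp, div_neg_iff]; right; constructor <;> linarith
  have hzz : zm < zp := by rw [hzm, hzp]; gcongr; linarith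
  have hJeq : J = G zp - G zm := by
    have h₁ : (ℓ + a - b - s) / (ℓ + a - b + s) = (zm + 1) / (zp + 1) := by
      rw [hzm, hzp]; field_simp; ring
    have h₂ : (ℓ - a + b - s) / (ℓ - a + b + s) = zp / zm := by
      rw [hzm, hzp, div_div_div_cancel_right₀ (by positivity), ← neg_div_neg_eq (-ℓ + a - b + s)]
      ring_nf
    have h₃ : ℓ * (zp - zm) = s := by rw [hzm, hzp]; field_simp; ring
    rw [hJ, h₁, h₂, hG',
      logPotential_sub (by linarith) (by linarith) (by linarith) (by linarith), h₃]
    ring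
  refine ⟨hJeq, hJeq ▸ sub_pos.2 ?_⟩
  have hsum : ℓ * (zm + zp) = a - b - ℓ := by rw [hzm, hzp]; field_simp; ring
  have hprod : ℓ * (zm * zp) = b := by
    rw [hzm, hzp]; field_simp; linear_combination -sq_sqrt hD₀.le - hD
  rw [hG']
  exact strictMonoOn_logPotential hℓ hsum hprod hzm₁ hzp₀ ⟨le_rfl, hzz.le⟩ ⟨hzz.le, le_rfl⟩ hzz
end
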